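/- The metric 'since' operator defined as φ S_I ψ := ⟨((τ;φ?)*)⁻⟩_{−I} ψ has the satisfaction condition: ⟨H,T,τ⟩,k ⊨ φ S_I ψ iff there exists j with 0 ≤ j ≤ k, τ(k) − τ(j) ∈ I, ⟨H,T,τ⟩,j ⊨ ψ, and ⟨H,T,τ⟩,i ⊨ φ for all i with j < i ≤ k. -/
import Mathlib


mutual
/-- Metric dynamic formulas over atoms `A`. -/
inductive DF (A : Type) : Type
  | atom : A → DF A
  | bot  : DF A
  | conj : DF A → DF A → DF A
  | disj : DF A → DF A → DF A
  | impl : DF A → DF A → DF A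
  | diam : PE A → Set ℤ → DF A → DF A   -- ⟨ρ⟩_I φ
  | box  : PE A → Set ℤ → DF A → DF A   -- [ρ]_I φ
/-- Path expressions. -/
inductive PE (A : Type) : Type
  | step   : PE A                 -- single time step τ
  | test   : DF A → PE A          -- φ?
  | seq    : PE A → PE A → PE A   -- ρ₁;ρ₂
  | choice : PE A → PE A → PE A   -- ρ₁+ρ₂
  | star   : PE A → PE A          -- ρ*
  | conv   : PE A → PE A          -- ρ⁻
end

mutual
/-- MDHT satisfaction of metric dynamic formulas on a timed HT-trace. -/
def SatD {A : Type} (τ : ℕ → ℤ) (lam : ℕ) :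
    (ℕ → Set A) → (ℕ → Set A) → ℕ → DF A → Prop
  | H, _, k, .atom a => a ∈ H k
  | _, _, _, .bot => False
  | H, T, k, .conj φ ψ => SatD τ lam H T k φ ∧ SatD τ lam H T k ψ
  | H, T, k, .disj φ ψ => SatD τ lam H T k φ ∨ SatD τ lam H T k ψ
  | H, T, k, .impl φ ψ =>
      (SatD τ lam H T k φ → SatD τ lam H T k ψ) ∧
      (SatD τ lam T T k φ → SatD τ lam T T k ψ)
  | H, T, k, .diam ρ I φ =>
      ∃ i, RelD τ lam H T ρ k i ∧ τ i - τ k ∈ I ∧ SatD τ lam H T i φ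
  | H, T, k, .box ρ I φ =>
      (∀ i, RelD τ lam H T ρ k i → τ i - τ k ∈ I → SatD τ lam H T i φ) ∧
      (∀ i, RelD τ lam T T ρ k i → τ i - τ k ∈ I → SatD τ lam T T i φ)
/-- MDHT accessibility relation of path expressions on a timed HT-trace. -/
def RelD {A : Type} (τ : ℕ → ℤ) (lam : ℕ) :
    (ℕ → Set A) → (ℕ → Set A) → PE A → ℕ → ℕ → Prop
  | _, _, .step, k, i => i = k + 1 ∧ i < lam
  | H, T, .test φ, k, i => i = k ∧ SatD τ lam H T k φ
  | H, T, .seq ρ1 ρ2, k, i => ∃ j, RelD τ lam H T ρ1 k j ∧ RelD τ lam H T ρ2 j i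
  | H, T, .choice ρ1 ρ2, k, i => RelD τ lam H T ρ1 k i ∨ RelD τ lam H T ρ2 k i
  | H, T, .star ρ, k, i => Relation.ReflTransGen (fun a b => RelD τ lam H T ρ a b) k i
  | H, T, .conv ρ, k, i => RelD τ lam H T ρ i k
end

mutual
/-- Classical (MDL) satisfaction of metric dynamic formulas on a timed trace. -/
def SatDC {A : Type} (τ : ℕ → ℤ) (lam : ℕ) (T : ℕ → Set A) : ℕ → DF A → Prop
  | k, .atom a => a ∈ T k
  | _, .bot => False
  | k, .conj φ ψ => SatDC τ lam T k φ ∧ SatDC τ lam T k ψ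
  | k, .disj φ ψ => SatDC τ lam T k φ ∨ SatDC τ lam T k ψ
  | k, .impl φ ψ => SatDC τ lam T k φ → SatDC τ lam T k ψ
  | k, .diam ρ I φ => ∃ i, RelDC τ lam T ρ k i ∧ τ i - τ k ∈ I ∧ SatDC τ lam T i φ
  | k, .box ρ I φ => ∀ i, RelDC τ lam T ρ k i → τ i - τ k ∈ I → SatDC τ lam T i φ
/-- Classical (MDL) accessibility relation. -/
def RelDC {A : Type} (τ : ℕ → ℤ) (lam : ℕ) (T : ℕ → Set A) : PE A → ℕ → ℕ → Prop
  | .step, k, i => i = k + 1 ∧ i < lam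
  | .test φ, k, i => i = k ∧ SatDC τ lam T k φ
  | .seq ρ1 ρ2, k, i => ∃ j, RelDC τ lam T ρ1 k j ∧ RelDC τ lam T ρ2 j i
  | .choice ρ1 ρ2, k, i => RelDC τ lam T ρ1 k i ∨ RelDC τ lam T ρ2 k i
  | .star ρ, k, i => Relation.ReflTransGen (fun a b => RelDC τ lam T ρ a b) k i
  | .conv ρ, k, i => RelDC τ lam T ρ i k
end

/-- The metric since operator `φ S_I ψ := ⟨((τ;φ?)*)⁻⟩_{-I} ψ`. -/
theorem since_satisfaction {A : Type} (H T : ℕ → Set A) (τ : ℕ → ℤ) (lam : ℕ)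
    (hτ : Monotone τ) (I : Set ℤ) (φ ψ : DF A) (k : ℕ) (hk : k < lam) :
    SatD τ lam H T k (.diam (.conv (.star (.seq .step (.test φ)))) (-I) ψ) ↔
      (∃ j, j ≤ k ∧ τ k - τ j ∈ I ∧ SatD τ lam H T j ψ ∧
        ∀ i, j < i → i ≤ k → SatD τ lam H T i φ) := by

  simp only [SatD, RelD]
  constructor
  · rintro ⟨i, hrel, hmem, hψ⟩
    have key : ∀ m, Relation.ReflTransGen
        (fun a b => RelD τ lam H T (.seq .step (.test φ)) a b) i m →
        i ≤ m ∧ ∀ j, i < j → j ≤ m → SatD τ lam H T j φ := by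
      intro m hm
      induction hm with
      | refl => exact ⟨le_refl _, fun j h1 h2 => absurd (lt_of_lt_of_le h1 h2) (lt_irrefl _)⟩
      | @tail b c hb hstep ih =>
        obtain ⟨hle, hall⟩ := ih
        simp only [RelD] at hstep
        obtain ⟨j', ⟨hj1, hj2⟩, hj3, hφ⟩ := hstep
        subst hj1; subst hj3
        refine ⟨hle.trans (Nat.le_succ _), fun j h1 h2 => ?_⟩
        rcases Nat.lt_succ_iff_lt_or_eq.mp (Nat.lt_succ_of_le h2) with h | h
        · exact hall j h1 (Nat.lt_succ_iff.mp h)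
        · subst h; exact hφ
    obtain ⟨hik, hall⟩ := key k hrel
    refine ⟨i, hik, ?_, hψ, hall⟩
    simpa [neg_sub] using hmem
  · rintro ⟨j, hjk, hmem, hψ, hall⟩
    have chain : ∀ m, j ≤ m → m ≤ k → Relation.ReflTransGen
        (fun a b => RelD τ lam H T (.seq .step (.test φ)) a b) j m := by
      intro m
      induction m with
      | zero => intro h1 _; rw [Nat.le_zero.mp h1]
      | succ n ih =>
        intro h1 h2
        rcases Nat.lt_or_ge j (n+1) with h | h
        · refine (ih (Nat.lt_succ_iff.mp h) (le_trans (Nat.le_succ n) h2)).tail ?_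
          simp only [RelD]
          exact ⟨n+1, ⟨rfl, lt_of_le_of_lt h2 hk⟩, rfl, hall (n+1) h h2⟩
        · rw [le_antisymm h h1]
    exact ⟨j, chain k hjk le_rfl, by simpa [neg_sub] using hmem, hψ⟩
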